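/- lim_{n→∞} (2π/n)·( 8·log( ∏_{j=⌊n/4⌋+1}^{⌊n/4⌋+⌊n/2⌋} 2 sin(jπ/n) ) − 4·log( ∏_{j=1}^{⌊n/2⌋} 2 sin(jπ/n) ) ) = 32·Λ(π/4) = 4·v_oct. [The exact exponential growth rate of the single dominant term in the lower bound (6.9) of the proof of Theorem 6.2, computed via Λ with 2Λ(π/2) + 4Λ(π/4) − 4Λ(3π/4) = 8Λ(π/4).] -/

import Mathlib

open Finset Filter Real

/-- The sine factorial `(k)!_n = ∏_{j=1}^k 2 sin(jπ/n)`. -/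
noncomputable def sf (n k : ℕ) : ℝ :=
  ∏ j ∈ Finset.Icc 1 k, 2 * Real.sin (j * Real.pi / n)

/-- The Lobachevsky function `Λ(x) = -∫₀ˣ log|2 sin t| dt`. -/
noncomputable def lob (x : ℝ) : ℝ := -∫ t in (0:ℝ)..x, Real.log |2 * Real.sin t|

/-!
For a primitive `n`-th root of unity `ζ`, `∏_{k=1}^{n-1} (1 - ζ^k) = n`; taking absolute values
with `|1 - e^{2πik/n}| = 2 sin(πk/n)` gives `(n-1)!_n = n`. The factors are symmetric under
`j ↦ n - j`, so the middle product is `n / ((a)!_n (c)!_n)` with `a = ⌊n/4⌋` and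
`c = n - 1 - ⌊n/4⌋ - ⌊n/2⌋`, both `~ n/4`, while `((⌊n/2⌋)!_n)²` is `n` or `2n`.
Since `log (2 sin t)` is increasing and integrable on `(0, π/2]`, `(π/n) log (k)!_n` is a Riemann
sum squeezed between two integrals, so it tends to `∫₀^{π/4} log (2 sin t) dt = -Λ(π/4)` when
`k/n → 1/4`.
-/

open MeasureTheory Topology

theorem IntervalIntegrable.of_mem_Icc {f : ℝ → ℝ} {μ : Measure ℝ} {a b c d : ℝ}
    (hf : IntervalIntegrable f μ a b) (hc : c ∈ Set.Icc a b) (hd : d ∈ Set.Icc a b) :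
    IntervalIntegrable f μ c d :=
  hf.mono_set (Set.uIcc_subset_uIcc (Set.Icc_subset_uIcc hc) (Set.Icc_subset_uIcc hd))

namespace MonotoneOn

variable {f : ℝ → ℝ} {b : ℝ}

theorem integral_le_mul_apply_right (hf : MonotoneOn f (Set.Ioc 0 b)) {s h : ℝ} (hs : 0 ≤ s)
    (hsh : s + h ≤ b) (hfi : IntervalIntegrable f volume s (s + h)) (hh : 0 ≤ h) :
    ∫ t in s..s + h, f t ≤ h * f (s + h) :=
  calc ∫ t in s..s + h, f t ≤ ∫ _ in s..s + h, f (s + h) :=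
        intervalIntegral.integral_mono_on_of_le_Ioo (by linarith) hfi intervalIntegrable_const
          fun t ht => hf ⟨hs.trans_lt ht.1, ht.2.le.trans hsh⟩
            ⟨hs.trans_lt (ht.1.trans ht.2), hsh⟩ ht.2.le
    _ = h * f (s + h) := by simp

theorem mul_apply_left_le_integral (hf : MonotoneOn f (Set.Ioc 0 b)) {s h : ℝ} (hs : 0 < s)
    (hsh : s + h ≤ b) (hfi : IntervalIntegrable f volume s (s + h)) (hh : 0 ≤ h) :
    h * f s ≤ ∫ t in s..s + h, f t :=
  calc h * f s = ∫ _ in s..s + h, f s := by simp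
    _ ≤ ∫ t in s..s + h, f t :=
        intervalIntegral.integral_mono_on (by linarith) intervalIntegrable_const hfi
          fun t ht => hf ⟨hs, by linarith [ht.2]⟩ ⟨hs.trans_le ht.1, ht.2.trans hsh⟩ ht.1

theorem integral_le_mul_sum (hf : MonotoneOn f (Set.Ioc 0 b))
    (hfi : IntervalIntegrable f volume 0 b) {h : ℝ} (hh : 0 ≤ h) {k : ℕ} (hk : k * h ≤ b) :
    ∫ t in 0..k * h, f t ≤ h * ∑ j ∈ Icc 1 k, f (j * h) := by
  induction k with
  | zero => simp
  | succ k ih =>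
    rw [sum_Icc_succ_top (by omega), mul_add]
    simp only [Nat.cast_succ, add_one_mul] at hk ⊢
    have hkh : 0 ≤ k * h := by positivity
    rw [← intervalIntegral.integral_add_adjacent_intervals
      (hfi.of_mem_Icc ⟨le_rfl, by linarith⟩ ⟨hkh, by linarith⟩)
      (hfi.of_mem_Icc ⟨hkh, by linarith⟩ ⟨by linarith, hk⟩)]
    gcongr
    · exact ih (by linarith)
    · exact hf.integral_le_mul_apply_right hkh hk
        (hfi.of_mem_Icc ⟨hkh, by linarith⟩ ⟨by linarith, hk⟩) hh

theorem mul_sum_le_integral (hf : MonotoneOn f (Set.Ioc 0 b))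
    (hfi : IntervalIntegrable f volume 0 b) {h : ℝ} (hh : 0 < h) {k : ℕ}
    (hk : (k + 1) * h ≤ b) :
    h * ∑ j ∈ Icc 1 k, f (j * h) ≤ ∫ t in h..(k + 1) * h, f t := by
  induction k with
  | zero => simp
  | succ k ih =>
    rw [sum_Icc_succ_top (by omega), mul_add]
    push_cast at hk ⊢
    rw [add_one_mul ((k : ℝ) + 1)] at hk ⊢
    have hkh : 0 < (k + 1) * h := by positivity
    rw [← intervalIntegral.integral_add_adjacent_intervals
      (hfi.of_mem_Icc ⟨hh.le, by linarith⟩ ⟨hkh.le, by linarith⟩)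
      (hfi.of_mem_Icc ⟨hkh.le, by linarith⟩ ⟨by linarith, hk⟩)]
    gcongr
    · exact ih (by linarith)
    · exact hf.mul_apply_left_le_integral hkh hk
        (hfi.of_mem_Icc ⟨hkh.le, by linarith⟩ ⟨by linarith, hk⟩) hh.le

theorem tendsto_mul_sum {ι : Type*} {l : Filter ι} (hf : MonotoneOn f (Set.Ioc 0 b))
    (hfi : IntervalIntegrable f volume 0 b) {x : ℝ} (hx : x ∈ Set.Ico 0 b) {h : ι → ℝ}
    {k : ι → ℕ} (hh : Tendsto h l (𝓝[>] 0)) (hk : Tendsto (fun i => k i * h i) l (𝓝 x)) :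
    Tendsto (fun i => h i * ∑ j ∈ Icc 1 (k i), f (j * h i)) l (𝓝 (∫ t in 0..x, f t)) := by
  set F : ℝ → ℝ := fun y => ∫ t in 0..y, f t
  have hb : 0 ≤ b := hx.1.trans hx.2.le
  have hF {u : ι → ℝ} {y : ℝ} (hy : y ∈ Set.Icc 0 b) (hu : Tendsto u l (𝓝 y))
      (hmem : ∀ᶠ i in l, u i ∈ Set.Icc 0 b) : Tendsto (fun i => F (u i)) l (𝓝 (F y)) := by
    have hcont := intervalIntegral.continuousOn_primitive_interval' hfi Set.left_mem_uIcc
    rw [Set.uIcc_of_le hb] at hcont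
    exact (hcont y hy).tendsto.comp (tendsto_nhdsWithin_iff.2 ⟨hu, hmem⟩)
  obtain ⟨hh0, hpos⟩ := tendsto_nhdsWithin_iff.1 hh
  have hk1 : Tendsto (fun i => (k i + 1) * h i) l (𝓝 x) := by
    simpa [add_mul] using hk.add hh0
  have hev : ∀ᶠ i in l, 0 < h i ∧ (k i + 1) * h i ≤ b :=
    hpos.and ((hk1.eventually (gt_mem_nhds hx.2)).mono fun _ => le_of_lt)
  have hkb : ∀ᶠ i in l, k i * h i ∈ Set.Icc 0 b :=
    hev.mono fun i ⟨hi, hi'⟩ => ⟨by positivity, by nlinarith⟩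
  have hk1b : ∀ᶠ i in l, (k i + 1) * h i ∈ Set.Icc 0 b :=
    hev.mono fun i ⟨hi, hi'⟩ => ⟨by positivity, hi'⟩
  have hhb : ∀ᶠ i in l, h i ∈ Set.Icc 0 b :=
    hev.mono fun i ⟨hi, hi'⟩ => ⟨hi.le, by nlinarith [(k i).cast_nonneg (α := ℝ)]⟩
  have hxb : x ∈ Set.Icc 0 b := Set.Ico_subset_Icc_self hx
  have hupper : Tendsto (fun i => F ((k i + 1) * h i) - F (h i)) l (𝓝 (F x)) := by
    simpa [F] using (hF hxb hk1 hk1b).sub (hF ⟨le_rfl, hb⟩ hh0 hhb)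
  refine tendsto_of_tendsto_of_tendsto_of_le_of_le' (hF hxb hk hkb) hupper ?_ ?_
  · filter_upwards [hpos, hkb] with i hi hi'
    exact hf.integral_le_mul_sum hfi hi.le hi'.2
  · filter_upwards [hev, hk1b, hhb] with i ⟨hi, hi'⟩ hmem hhm
    rw [intervalIntegral.integral_interval_sub_left (hfi.of_mem_Icc ⟨le_rfl, hb⟩ hmem)
      (hfi.of_mem_Icc ⟨le_rfl, hb⟩ hhm)]
    exact hf.mul_sum_le_integral hfi hi hi'

end MonotoneOn

theorem two_mul_sin_pos {n j : ℕ} (hj : 0 < j) (hjn : j < n) : 0 < 2 * sin (j * π / n) := by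
  have hn : (0 : ℝ) < n := by exact_mod_cast hj.trans hjn
  have hjn' : (j : ℝ) < n := by exact_mod_cast hjn
  have : j * π / n < π := by rw [div_lt_iff₀ hn]; nlinarith [pi_pos]
  have : 0 < sin (j * π / n) := sin_pos_of_pos_of_lt_pi (by positivity) this
  linarith

theorem sf_pos {n k : ℕ} (hk : k < n) : 0 < sf n k :=
  prod_pos fun j hj => two_mul_sin_pos (mem_Icc.1 hj).1 (by grind)

theorem sf_sub_one {n : ℕ} (hn : 0 < n) : sf n (n - 1) = n := by
  obtain ⟨N, rfl⟩ : ∃ N, n = N + 1 := ⟨n - 1, by omega⟩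
  have hμ := (Complex.isPrimitiveRoot_exp (N + 1) N.succ_ne_zero).prod_one_sub_pow_eq_order
  have hfactor (k : ℕ) (hk : k ∈ range N) :
      ‖1 - Complex.exp (2 * π * Complex.I / (N + 1 : ℕ)) ^ (k + 1)‖
        = 2 * sin ((k + 1 : ℕ) * π / (N + 1 : ℕ)) := by
    rw [← Complex.exp_nat_mul, norm_sub_rev,
      show ((k + 1 : ℕ) : ℂ) * (2 * π * Complex.I / (N + 1 : ℕ))
        = Complex.I * ((2 * ((k + 1 : ℕ) * π / (N + 1 : ℕ)) : ℝ) : ℂ) by push_cast; ring,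
      Complex.norm_exp_I_mul_ofReal_sub_one, mul_div_cancel_left₀ _ two_ne_zero, norm_of_nonneg
        (two_mul_sin_pos k.succ_pos (by simpa using hk)).le]
  have := congrArg norm hμ
  rw [norm_prod, prod_congr rfl hfactor, show (N : ℂ) + 1 = (N + 1 : ℕ) by push_cast; ring,
    Complex.norm_natCast] at this
  rw [sf, Nat.add_sub_cancel, ← Finset.Ico_add_one_right_eq_Icc, prod_Ico_eq_prod_range,
    Nat.add_sub_cancel]
  simpa [add_comm 1] using this

theorem sf_mul_prod_Ioc {n a b : ℕ} (hab : a ≤ b) :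
    sf n a * ∏ j ∈ Ioc a b, 2 * sin (j * π / n) = sf n b := by
  have hIcc (c : ℕ) : Icc 1 c = Ioc 0 c := Finset.Icc_add_one_left_eq_Ioc 0 c
  rw [sf, sf, hIcc, hIcc, prod_Ioc_consecutive _ a.zero_le hab]

theorem prod_Ioc_sub_one_eq_sf {n k : ℕ} (hk : k < n) :
    ∏ j ∈ Ioc k (n - 1), 2 * sin (j * π / n) = sf n (n - 1 - k) := by
  refine prod_nbij' (fun j => n - j) (fun j => n - j) ?_ ?_ ?_ ?_ ?_
  all_goals try (intro j hj; simp only [mem_Ioc, mem_Icc] at hj ⊢; omega)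
  intro j hj
  have hjn : j ≤ n := by grind
  have hn : (n : ℝ) ≠ 0 := Nat.cast_ne_zero.2 (by omega)
  rw [Nat.cast_sub hjn, sub_mul, sub_div, mul_div_cancel_left₀ _ hn, sin_pi_sub]

theorem sf_mul_sf_sub_one_sub {n k : ℕ} (hk : k < n) : sf n k * sf n (n - 1 - k) = n := by
  rw [← prod_Ioc_sub_one_eq_sf hk, sf_mul_prod_Ioc (by omega), sf_sub_one (by omega)]

theorem log_sf {n k : ℕ} (hk : k < n) :
    log (sf n k) = ∑ j ∈ Icc 1 k, log (2 * sin (j * (π / n))) := by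
  rw [sf, log_prod fun j hj => (two_mul_sin_pos (Finset.mem_Icc.1 hj).1 (by grind)).ne']
  simp only [mul_div_assoc]

theorem log_prod_Icc_add_one_add {n a m : ℕ} (h : a + m < n) :
    log (∏ j ∈ Icc (a + 1) (a + m), 2 * sin (j * π / n))
      = log n - log (sf n a) - log (sf n (n - 1 - (a + m))) := by
  have ha := sf_pos (n := n) (k := a) (by omega)
  have hc := sf_pos (n := n) (k := n - 1 - (a + m)) (by omega)
  have hprod : ∏ j ∈ Icc (a + 1) (a + m), 2 * sin (j * π / n)
      = n / (sf n a * sf n (n - 1 - (a + m))) := by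
    rw [eq_div_iff (by positivity), Finset.Icc_add_one_left_eq_Ioc, mul_comm, mul_right_comm,
      sf_mul_prod_Ioc (a.le_add_right m), sf_mul_sf_sub_one_sub h]
  rw [hprod, log_div (Nat.cast_ne_zero.2 (by omega)) (by positivity), log_mul ha.ne' hc.ne']
  ring

theorem sf_half_sq_mem {n : ℕ} (hn : 0 < n) : sf n (n / 2) ^ 2 ∈ Set.Icc (n : ℝ) (2 * n) := by
  set m := n / 2
  have hsq : sf n m ^ 2 = n * ∏ j ∈ Ioc (n - 1 - m) m, 2 * sin (j * π / n) := by
    rw [sq]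
    nth_rw 2 [← sf_mul_prod_Ioc (n := n) (a := n - 1 - m) (b := m) (by omega)]
    rw [← mul_assoc, sf_mul_sf_sub_one_sub (by omega)]
  have hn' : (0 : ℝ) < n := by exact_mod_cast hn
  rcases Nat.even_or_odd n with ⟨r, hr⟩ | ⟨r, hr⟩
  · have hIoc : Ioc (n - 1 - m) m = {m} := by ext; simp only [Finset.mem_Ioc, mem_singleton]; omega
    have hm : (m : ℝ) * π / n = π / 2 := by
      have hr0 : (r : ℝ) ≠ 0 := Nat.cast_ne_zero.2 (by omega)
      rw [show m = r by omega, hr]; push_cast; field_simp; ring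
    rw [hsq, hIoc, prod_singleton, hm, sin_pi_div_two]
    constructor <;> linarith
  · rw [hsq, show n - 1 - m = m by omega, Ioc_self, prod_empty, mul_one]
    constructor <;> linarith

theorem sf_half_mem_Icc {n : ℕ} (hn : 2 ≤ n) : sf n (n / 2) ∈ Set.Icc 1 (n : ℝ) := by
  have hsq := sf_half_sq_mem (n := n) (by omega)
  have hpos := sf_pos (n := n) (k := n / 2) (by omega)
  have hn' : (2 : ℝ) ≤ n := by exact_mod_cast hn
  constructor <;> nlinarith [hsq.1, hsq.2]

theorem monotoneOn_log_two_mul_sin : MonotoneOn (fun t => log (2 * sin t)) (Set.Ioc 0 (π / 2)) :=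
  fun x hx y hy hxy => by
    have hsx : 0 < sin x := sin_pos_of_pos_of_lt_pi hx.1 (by linarith [hx.2, pi_pos])
    have := sin_le_sin_of_le_of_le_pi_div_two (by linarith [hx.1, pi_pos]) hy.2 hxy
    exact log_le_log (by positivity) (by linarith)

theorem intervalIntegrable_log_two_mul_sin (a b : ℝ) :
    IntervalIntegrable (fun t => log (2 * sin t)) volume a b :=
  (analyticOnNhd_const.mul analyticOnNhd_sin).meromorphicOn.intervalIntegrable_log

theorem lob_eq_neg_integral {x : ℝ} (hx0 : 0 ≤ x) (hxπ : x ≤ π) :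
    lob x = -∫ t in 0..x, log (2 * sin t) := by
  rw [lob, intervalIntegral.integral_congr fun t ht => ?_]
  rw [Set.uIcc_of_le hx0] at ht
  rw [abs_of_nonneg (mul_nonneg zero_le_two
    (sin_nonneg_of_nonneg_of_le_pi ht.1 (ht.2.trans hxπ)))]

theorem tendsto_mul_log_sf {k : ℕ → ℕ} {c : ℝ} (hc : c ∈ Set.Ico 0 (1 / 2))
    (hk : Tendsto (fun n => (k n : ℝ) / n) atTop (𝓝 c)) :
    Tendsto (fun n : ℕ => π / n * log (sf n (k n))) atTop
      (𝓝 (∫ t in 0..c * π, log (2 * sin t))) := by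
  have hh : Tendsto (fun n : ℕ => π / n) atTop (𝓝[>] 0) :=
    tendsto_nhdsWithin_iff.2 ⟨tendsto_const_div_atTop_nhds_zero_nat π,
      (eventually_gt_atTop 0).mono fun n hn => div_pos pi_pos (by exact_mod_cast hn)⟩
  have hlt : ∀ᶠ n in atTop, k n < n := by
    filter_upwards [hk.eventually (gt_mem_nhds (hc.2.trans one_half_lt_one)), eventually_gt_atTop 0]
      with n hn hn0
    rw [div_lt_one (by exact_mod_cast hn0)] at hn
    exact_mod_cast hn
  have hsum := monotoneOn_log_two_mul_sin.tendsto_mul_sum (intervalIntegrable_log_two_mul_sin 0 _)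
    ⟨by nlinarith [hc.1, pi_pos], by nlinarith [hc.2, pi_pos]⟩ hh
    ((hk.mul_const π).congr fun n => by ring)
  refine hsum.congr' ?_
  filter_upwards [hlt] with n hn
  rw [log_sf hn]

theorem tendsto_natCast_div_div_self {d : ℕ} (hd : 0 < d) :
    Tendsto (fun n : ℕ => ((n / d : ℕ) : ℝ) / n) atTop (𝓝 (1 / d)) := by
  have hd' : (0 : ℝ) < d := by exact_mod_cast hd
  have h := (tendsto_nat_floor_div_atTop.comp
    ((tendsto_natCast_atTop_atTop (R := ℝ)).atTop_div_const hd')).div_const (d : ℝ)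
  refine (h.congr fun n => ?_).trans (by rw [one_div])
  simp only [Function.comp_apply, Nat.floor_div_eq_div, div_div, div_mul_cancel₀ _ hd'.ne']

theorem tendsto_log_natCast_div : Tendsto (fun n : ℕ => log n / n) atTop (𝓝 0) :=
  isLittleO_log_id_atTop.tendsto_div_nhds_zero.comp tendsto_natCast_atTop_atTop

theorem tendsto_log_sf_half_div :
    Tendsto (fun n : ℕ => log (sf n (n / 2)) / n) atTop (𝓝 0) := by
  refine tendsto_of_tendsto_of_tendsto_of_le_of_le' tendsto_const_nhds tendsto_log_natCast_div
    ?_ ?_ <;> filter_upwards [eventually_ge_atTop 2] with n hn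
  · exact div_nonneg (log_nonneg (sf_half_mem_Icc hn).1) n.cast_nonneg
  · exact div_le_div_of_nonneg_right
      (log_le_log (sf_pos (by omega)) (sf_half_mem_Icc hn).2) n.cast_nonneg

theorem tendsto_natCast_sub_quarter_sub_half_div :
    Tendsto (fun n : ℕ => ((n - 1 - (n / 4 + n / 2) : ℕ) : ℝ) / n) atTop (𝓝 (1 / 4)) := by
  have hquarter := tendsto_natCast_div_div_self (d := 4) (by norm_num)
  have hhalf := tendsto_natCast_div_div_self (d := 2) (by norm_num)
  have h := ((tendsto_const_nhds (x := (1 : ℝ))).sub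
    (tendsto_const_div_atTop_nhds_zero_nat 1)).sub (hquarter.add hhalf)
  norm_num at h
  refine h.congr' ?_
  filter_upwards [eventually_gt_atTop 0] with n hn
  rw [Nat.cast_sub (by omega), Nat.cast_sub (by omega)]
  push_cast
  field_simp

theorem dominant_term_growth_rate :
    Filter.Tendsto
      (fun n : ℕ => (2 * Real.pi / n) *
        (8 * Real.log (∏ j ∈ Finset.Icc (n / 4 + 1) (n / 4 + n / 2),
              2 * Real.sin (j * Real.pi / n)) -
          4 * Real.log (∏ j ∈ Finset.Icc 1 (n / 2), 2 * Real.sin (j * Real.pi / n))))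
      Filter.atTop (nhds (32 * lob (Real.pi / 4))) := by
  have hc : (1 / 4 : ℝ) ∈ Set.Ico 0 (1 / 2) := ⟨by norm_num, by norm_num⟩
  have hquarter := tendsto_mul_log_sf hc (tendsto_natCast_div_div_self (d := 4) (by norm_num))
  have hrest := tendsto_mul_log_sf hc tendsto_natCast_sub_quarter_sub_half_div
  have hI : ∫ t in 0..1 / 4 * π, log (2 * sin t) = -lob (π / 4) := by
    rw [lob_eq_neg_integral (by positivity) (by linarith [pi_pos]), neg_neg, one_div_mul_eq_div]
  have h := (((tendsto_log_natCast_div.const_mul (16 * π)).sub (hquarter.const_mul 16)).sub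
    (hrest.const_mul 16)).sub (tendsto_log_sf_half_div.const_mul (8 * π))
  rw [hI, show 16 * π * 0 - 16 * -lob (π / 4) - 16 * -lob (π / 4) - 8 * π * 0
    = 32 * lob (π / 4) by ring] at h
  refine h.congr' ?_
  filter_upwards [eventually_gt_atTop 0] with n hn
  rw [log_prod_Icc_add_one_add (by omega), ← sf]
  ring
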